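/- arXiv:quant-ph/0609181 — 2 statements merged into one kernel-verified Lean document; each statement's English description precedes it below -/
import Mathlib

section
/- In an e-ring, for projections p,q the following are equivalent: (i) p+q ∈ E; (ii) p+q ≤ 1; (iii) pq = 0; (iv) pq = qp = 0; (v) p+q is a projection. -/
/-- An e-ring: an associative unital ring `R` together with a set `E` of effects.
`E⁺` is the additive submonoid generated by `E` (the set of finite sums of effects). -/
structure ERing (R : Type*) [Ring R] where
  E : Set R
  zero_mem : (0:R) ∈ E
  one_mem : (1:R) ∈ E
  compl_mem : ∀ e ∈ E, 1 - e ∈ E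
  ax_i : ∀ a ∈ AddSubmonoid.closure E, -a ∈ AddSubmonoid.closure E → a = 0
  ax_ii : ∀ a ∈ AddSubmonoid.closure E, 1 - a ∈ AddSubmonoid.closure E → a ∈ E
  ax_iii : ∀ a ∈ AddSubmonoid.closure E, ∀ b ∈ AddSubmonoid.closure E,
    a * b = b * a → a * b ∈ AddSubmonoid.closure E
  ax_iv : ∀ a ∈ AddSubmonoid.closure E, ∀ b ∈ AddSubmonoid.closure E,
    a * b * a ∈ AddSubmonoid.closure E
  ax_v : ∀ a ∈ AddSubmonoid.closure E, ∀ b ∈ AddSubmonoid.closure E,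
    a * b * a = 0 → a * b = 0 ∧ b * a = 0
  ax_vi : ∀ a ∈ AddSubmonoid.closure E, ∀ b ∈ AddSubmonoid.closure E,
    (a - b) * (a - b) ∈ AddSubmonoid.closure E

namespace ERing

variable {R : Type*} [Ring R]

/-- The positive cone `E⁺`: all finite sums of effects. -/
def Ep (S : ERing R) : Set R := (AddSubmonoid.closure S.E : Set R)

/-- The directed group `G = E⁺ − E⁺` (as a subset of `R`). -/
def G (S : ERing R) : Set R := {x | ∃ a ∈ S.Ep, ∃ b ∈ S.Ep, x = a - b}

/-- The partial order with positive cone `E⁺`: `g ≤ h` iff `h − g ∈ E⁺`. -/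
def le (S : ERing R) (g h : R) : Prop := h - g ∈ S.Ep

/-- The set of projections: idempotent elements of `G`. -/
def P (S : ERing R) : Set R := {p | p ∈ S.G ∧ p * p = p}

end ERing

/-!
A projection `p = a - b` with `a, b ∈ E⁺` equals `p² = (a - b)²`, so it lies in `E⁺`, and so does
`1 - p`; hence projections are effects. If `p + q ≤ 1`, then `p (1 - p - q) p = -pqp` puts `pqp`
in `E⁺ ∩ -E⁺ = 0`, and the axiom `aba = 0 → ab = ba = 0` gives `pq = qp = 0`. Orthogonality makes
`p + q` idempotent, and then it is an effect as every projection is.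
-/

namespace ERing

variable {R : Type*} [Ring R] (S : ERing R)

theorem one_mem_Ep : (1 : R) ∈ S.Ep := AddSubmonoid.subset_closure S.one_mem

theorem mem_Ep_of_mem_P {p : R} (hp : p ∈ S.P) : p ∈ S.Ep := by
  obtain ⟨⟨a, ha, b, hb, rfl⟩, hpp⟩ := hp
  have hsq := S.ax_vi a ha b hb
  rwa [hpp] at hsq

theorem one_sub_mem_P {p : R} (hp : p ∈ S.P) : 1 - p ∈ S.P := by
  refine ⟨⟨1, S.one_mem_Ep, p, S.mem_Ep_of_mem_P hp, rfl⟩, ?_⟩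
  simp only [mul_sub, sub_mul, one_mul, mul_one, hp.2, sub_self, sub_zero]

theorem mem_E_of_mem_P {p : R} (hp : p ∈ S.P) : p ∈ S.E :=
  S.ax_ii p (S.mem_Ep_of_mem_P hp) (S.mem_Ep_of_mem_P (S.one_sub_mem_P hp))

theorem le_one_of_mem_E {e : R} (he : e ∈ S.E) : S.le e 1 :=
  AddSubmonoid.subset_closure (S.compl_mem e he)

theorem mul_eq_zero_swap {a b : R} (ha : a ∈ S.Ep) (hb : b ∈ S.Ep) (h : a * b = 0) :
    b * a = 0 :=
  (S.ax_v a ha b hb (by rw [h, zero_mul])).2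

theorem mul_eq_zero_of_add_le_one {p q : R} (hp : p ∈ S.P) (hq : q ∈ S.Ep)
    (h : S.le (p + q) 1) : p * q = 0 := by
  have hpEp := S.mem_Ep_of_mem_P hp
  have hneg : p * (1 - (p + q)) * p = -(p * q * p) := by
    simp only [mul_sub, sub_mul, mul_add, add_mul, mul_one, hp.2]
    abel
  have hpqp : p * q * p = 0 :=
    S.ax_i _ (S.ax_iv p hpEp q hq) (hneg ▸ S.ax_iv p hpEp _ h)
  exact (S.ax_v p hpEp q hq hpqp).1

theorem add_mem_P_of_mul_eq_zero {p q : R} (hp : p ∈ S.P) (hq : q ∈ S.P)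
    (hpq : p * q = 0) (hqp : q * p = 0) : p + q ∈ S.P := by
  have hsum : p + q ∈ S.Ep := add_mem (S.mem_Ep_of_mem_P hp) (S.mem_Ep_of_mem_P hq)
  refine ⟨⟨p + q, hsum, 0, (AddSubmonoid.closure S.E).zero_mem, (sub_zero _).symm⟩, ?_⟩
  simp only [add_mul, mul_add, hp.2, hq.2, hpq, hqp, add_zero, zero_add]

end ERing

theorem stmt10 {R : Type*} [Ring R] (S : ERing R) :
    ∀ p ∈ S.P, ∀ q ∈ S.P,
      List.TFAE [p + q ∈ S.E, S.le (p + q) 1, p * q = 0, p * q = 0 ∧ q * p = 0,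
        p + q ∈ S.P] := by
  intro p hp q hq
  have hpEp := S.mem_Ep_of_mem_P hp
  have hqEp := S.mem_Ep_of_mem_P hq
  tfae_have 1 → 2 := S.le_one_of_mem_E
  tfae_have 2 → 3 := S.mul_eq_zero_of_add_le_one hp hqEp
  tfae_have 3 → 4 := fun h => ⟨h, S.mul_eq_zero_swap hpEp hqEp h⟩
  tfae_have 4 → 5 := fun ⟨hpq, hqp⟩ => S.add_mem_P_of_mul_eq_zero hp hq hpq hqp
  tfae_have 5 → 1 := S.mem_E_of_mem_P
  tfae_finish
end

section
/- In an e-ring, for e ∈ E the following are equivalent: (i) whenever a,b,a+b ∈ E with a,b ≤ e, then a+b ≤ e; (ii) the only d ∈ E with d ≤ e and d ≤ 1−e is d = 0; (iii) e² = e. -/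
/-!
For `e ∈ E` the element `e - e² = e(1 - e)` is an effect lying below both `e` and `1 - e`
(the differences are the squares `e²` and `(1 - e)²`), so (ii) forces `e² = e`. Conversely, if `e`
is idempotent and `0 ≤ x ≤ e`, then `(1 - e) x (1 - e)` is both positive and negative, hence zero,
and axiom (v) gives `e x = x = x e`; compressing `1 - (a + b) ≥ 0` by `e` then yields
`e - (a + b) ≥ 0`. Finally (i) applied to `d` and `e` turns `d ≤ 1 - e` into `d + e ≤ e`, i.e. `d ≤ 0`.
-/

namespace ERing

variable {R : Type*} [Ring R] (S : ERing R)

theorem le_iff_sub_mem_Ep {g h : R} : S.le g h ↔ h - g ∈ S.Ep := Iff.rfl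

theorem le_refl (a : R) : S.le a a := by
  rw [le_iff_sub_mem_Ep, sub_self]
  exact AddSubmonoid.zero_mem _

theorem subset_Ep : S.E ⊆ S.Ep := AddSubmonoid.subset_closure

theorem add_mem_Ep {a b : R} (ha : a ∈ S.Ep) (hb : b ∈ S.Ep) : a + b ∈ S.Ep :=
  AddSubmonoid.add_mem _ ha hb

theorem mul_self_mem_Ep {a : R} (ha : a ∈ S.Ep) : a * a ∈ S.Ep :=
  S.ax_iii a ha a ha rfl

theorem eq_zero_of_mem_Ep_of_neg_mem_Ep {a : R} (ha : a ∈ S.Ep) (hna : -a ∈ S.Ep) : a = 0 :=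
  S.ax_i a ha hna

theorem sub_mul_self_mem_E {e : R} (he : e ∈ S.E) : e - e * e ∈ S.E := by
  have he' := S.subset_Ep he
  have hc := S.subset_Ep (S.compl_mem e he)
  refine S.ax_ii _ ?_ ?_
  · simpa only [mul_sub, mul_one] using S.ax_iii e he' (1 - e) hc (by noncomm_ring)
  · rw [show (1 : R) - (e - e * e) = (1 - e) + e * e by abel]
    exact S.add_mem_Ep hc (S.mul_self_mem_Ep he')

theorem sub_mul_self_le {e : R} (he : e ∈ S.Ep) : S.le (e - e * e) e := by
  rw [le_iff_sub_mem_Ep, sub_sub_cancel]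
  exact S.mul_self_mem_Ep he

theorem sub_mul_self_le_one_sub {e : R} (hc : 1 - e ∈ S.Ep) : S.le (e - e * e) (1 - e) := by
  rw [le_iff_sub_mem_Ep, show (1 : R) - e - (e - e * e) = (1 - e) * (1 - e) by noncomm_ring]
  exact S.mul_self_mem_Ep hc

theorem add_mem_E_of_le_one_sub {d e : R} (hd : d ∈ S.Ep) (he : e ∈ S.Ep)
    (hde : S.le d (1 - e)) : d + e ∈ S.E := by
  refine S.ax_ii _ (S.add_mem_Ep hd he) ?_
  rw [show (1 : R) - (d + e) = (1 - e) - d by abel]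
  exact hde

theorem eq_zero_of_add_le {d e : R} (hd : d ∈ S.Ep) (h : S.le (d + e) e) : d = 0 := by
  refine S.eq_zero_of_mem_Ep_of_neg_mem_Ep hd ?_
  rw [show -d = e - (d + e) by abel]
  exact h

theorem mul_eq_self_and_eq_mul_of_le_of_mul_self_eq {e x : R} (he : e * e = e)
    (hc : 1 - e ∈ S.Ep) (hx : x ∈ S.Ep) (hxe : S.le x e) : e * x = x ∧ x * e = x := by
  have hce : (1 - e) * e = 0 := by rw [sub_mul, one_mul, he, sub_self]
  have hneg : -((1 - e) * x * (1 - e)) ∈ S.Ep := by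
    have h := S.ax_iv _ hc _ hxe
    rwa [mul_sub (1 - e), hce, zero_sub, neg_mul] at h
  have hzero := S.eq_zero_of_mem_Ep_of_neg_mem_Ep (S.ax_iv _ hc _ hx) hneg
  obtain ⟨hl, hr⟩ := S.ax_v _ hc _ hx hzero
  rw [sub_mul, one_mul, sub_eq_zero] at hl
  rw [mul_sub, mul_one, sub_eq_zero] at hr
  exact ⟨hl.symm, hr.symm⟩

theorem add_le_of_le_of_mul_self_eq {e a b : R} (he : e ∈ S.E) (hee : e * e = e)
    (ha : a ∈ S.E) (hb : b ∈ S.E) (hab : a + b ∈ S.E) (hae : S.le a e) (hbe : S.le b e) :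
    S.le (a + b) e := by
  have hc := S.subset_Ep (S.compl_mem e he)
  obtain ⟨hea, hae'⟩ := S.mul_eq_self_and_eq_mul_of_le_of_mul_self_eq hee hc (S.subset_Ep ha) hae
  obtain ⟨heb, hbe'⟩ := S.mul_eq_self_and_eq_mul_of_le_of_mul_self_eq hee hc (S.subset_Ep hb) hbe
  have h := S.ax_iv e (S.subset_Ep he) _ (S.subset_Ep (S.compl_mem _ hab))
  rwa [mul_sub, mul_one, mul_add, hea, heb, sub_mul, add_mul, hee, hae', hbe'] at h

end ERing

theorem stmt16 {R : Type*} [Ring R] (S : ERing R) :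
    ∀ e ∈ S.E,
      List.TFAE
        [∀ a ∈ S.E, ∀ b ∈ S.E, a + b ∈ S.E → S.le a e → S.le b e →
          S.le (a + b) e,
         ∀ d ∈ S.E, S.le d e → S.le d (1 - e) → d = 0,
         e * e = e] := by
  intro e he
  have he' := S.subset_Ep he
  tfae_have 1 → 2 := fun h1 d hd hde hdc =>
    S.eq_zero_of_add_le (S.subset_Ep hd) <|
      h1 d hd e he (S.add_mem_E_of_le_one_sub (S.subset_Ep hd) he' hdc) hde
        (S.le_refl e)
  tfae_have 2 → 3 := fun h2 =>
    (sub_eq_zero.mp (h2 _ (S.sub_mul_self_mem_E he) (S.sub_mul_self_le he')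
      (S.sub_mul_self_le_one_sub (S.subset_Ep (S.compl_mem e he))))).symm
  tfae_have 3 → 1 := fun h3 _ ha _ hb hab hae hbe =>
    S.add_le_of_le_of_mul_self_eq he h3 ha hb hab hae hbe
  tfae_finish
end
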